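/- For every n ≥ 2, the real symmetric matrix M ∈ ℝ^{2^n × 2^n} is positive definite: for every nonzero vector a ∈ ℝ^{2^n}, Σ_{j,k} a_j·M_{jk}·a_k > 0. -/

import Mathlib

/-- Hamming weight: number of 1's in the `n`-bit binary representation of `i`. -/
def hamW (n i : ℕ) : ℕ := ((Finset.range n).filter (fun p => i.testBit p)).card

/-- Hamming distance between the `n`-bit binary representations of `i` and `j`. -/
def hamD (n i j : ℕ) : ℕ :=
  ((Finset.range n).filter (fun p => i.testBit p ≠ j.testBit p)).card

/-- The matrix `M`. -/
noncomputable def Mmat (n : ℕ) : Matrix (Fin (2 ^ n)) (Fin (2 ^ n)) ℝ := fun i j =>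
  if i = j then
    ((n : ℝ) - 1) * (1 - 1 / Real.sqrt 2) +
      (1 / n) * ((n : ℝ) - (2 * (hamW n i : ℝ) - (n : ℝ)) ^ 2) * (1 - 1 / Real.sqrt 2) ^ 2
  else
    (2 / n) * (1 - 1 / Real.sqrt 2) ^ 2 *
      ((if hamD n i j = 1 then (n : ℝ) - 1 - 2 * (min (hamW n i) (hamW n j) : ℝ) else 0)
        - (if hamD n i j = 2 then 1 else 0))

open Finset Matrix

/-!
Write `c = 1 - 1/√2` and `B = Σ_p (Z_p - X_p)`, where `Z_p` multiplies by the sign `(-1)^(bit p)`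
and `X_p` flips bit `p`; thus `B = diag (n - 2W) - A` with `A` the adjacency matrix of the
hypercube. Since `A` is supported on Hamming distance one and `A²` counts common neighbours
(`n` on the diagonal, `2` at distance two), reading off entries gives
`M = ((n - 1) c + 2c²) I - (c²/n) B²`. As `Z_p` and `X_p` anticommute, `(Z_p - X_p)² = 2`, so by
Cauchy–Schwarz `‖B a‖² ≤ n Σ_p ‖(Z_p - X_p) a‖² = 2n² ‖a‖²`, whence
`aᵀ M a ≥ (n - 1) c (1 - 2c) ‖a‖² > 0` because `2c = 2 - √2 < 1`.
-/

section QuadraticForms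

variable {ι : Type*} [Fintype ι]

lemma sum_sq_mul_sub_comp_of_involutive {f : ι → ι} (hf : Function.Involutive f) {z : ι → ℝ}
    (hz : ∀ i, z (f i) = -z i) (hz2 : ∀ i, z i ^ 2 = 1) (a : ι → ℝ) :
    ∑ i, (z i * a i - a (f i)) ^ 2 = 2 * ∑ i, a i ^ 2 := by
  have hcross : ∑ i, z i * a i * a (f i) = 0 := by
    have h := hf.bijective.sum_comp (fun i => z i * a i * a (f i))
    simp only [hf _, hz] at h
    linarith [show ∑ i, -z i * a (f i) * a i = -∑ i, z i * a i * a (f i) by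
      rw [← sum_neg_distrib]; exact sum_congr rfl fun i _ => by ring]
  have hsq : ∑ i, a (f i) ^ 2 = ∑ i, a i ^ 2 := hf.bijective.sum_comp (fun i => a i ^ 2)
  calc ∑ i, (z i * a i - a (f i)) ^ 2
      = ∑ i, (z i ^ 2 * a i ^ 2 + a (f i) ^ 2 - 2 * (z i * a i * a (f i))) :=
        sum_congr rfl fun i _ => by ring
    _ = 2 * ∑ i, a i ^ 2 := by
        simp only [hz2, one_mul, sum_sub_distrib, sum_add_distrib, ← mul_sum, hsq, hcross]
        ring

lemma sum_sq_sum_le_card_mul {κ : Type*} [Fintype κ] (v : κ → ι → ℝ) :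
    ∑ i, (∑ p, v p i) ^ 2 ≤ Fintype.card κ * ∑ p, ∑ i, v p i ^ 2 := by
  rw [sum_comm, mul_sum]
  exact sum_le_sum fun i _ => sq_sum_le_card_mul_sum_sq

lemma sum_mul_smul_one_sub_smul_mul_self_mul [DecidableEq ι] {B : Matrix ι ι ℝ} (hB : Bᵀ = B)
    (α β : ℝ) (a : ι → ℝ) :
    ∑ j, ∑ k, a j * (α • 1 - β • (B * B)) j k * a k
      = α * ∑ i, a i ^ 2 - β * ∑ i, (B *ᵥ a) i ^ 2 := by
  have hquad : ∀ M : Matrix ι ι ℝ, ∑ j, ∑ k, a j * M j k * a k = a ⬝ᵥ M *ᵥ a := fun M => by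
    simp only [dotProduct, mulVec, mul_sum, mul_assoc]
  rw [hquad, sub_mulVec, smul_mulVec, smul_mulVec, one_mulVec, ← mulVec_mulVec, dotProduct_sub,
    dotProduct_smul, dotProduct_smul, dotProduct_mulVec, ← vecMul_transpose, hB]
  simp only [dotProduct, smul_eq_mul, sq]

end QuadraticForms

section Hamming

variable {n : ℕ}

lemma hamD_eq_hamW_xor (i j : ℕ) : hamD n i j = hamW n (i ^^^ j) := by
  simp only [hamD, hamW, Nat.testBit_xor, bne_iff_ne, ne_eq]

lemma hamD_self (i : ℕ) : hamD n i i = 0 := by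
  simp [hamD]

lemma hamD_comm (i j : ℕ) : hamD n i j = hamD n j i := by
  rw [hamD_eq_hamW_xor, hamD_eq_hamW_xor, Nat.xor_comm]

lemma hamW_eq_length_bitIndices {m : ℕ} (hm : m < 2 ^ n) :
    hamW n m = m.bitIndices.length := by
  rw [hamW, ← List.toFinset_card_of_nodup Nat.bitIndices_nodup]
  congr 1
  ext p
  simp only [mem_filter, mem_range, List.mem_toFinset, Nat.mem_bitIndices, and_iff_right_iff_imp]
  intro hp
  by_contra! hnp
  simp [Nat.testBit_lt_two_pow (hm.trans_le (Nat.pow_le_pow_right two_pos hnp))] at hp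

lemma hamW_eq_zero_iff {m : ℕ} (hm : m < 2 ^ n) : hamW n m = 0 ↔ m = 0 := by
  rw [hamW_eq_length_bitIndices hm, List.length_eq_zero_iff]
  refine ⟨fun h => ?_, fun h => h ▸ Nat.bitIndices_zero⟩
  rw [← Nat.sum_map_two_pow_bitIndices m, h, List.map_nil, List.sum_nil]

lemma exists_eq_two_pow_of_hamW_eq_one {m : ℕ} (hm : m < 2 ^ n) (h : hamW n m = 1) :
    ∃ p < n, m = 2 ^ p := by
  rw [hamW_eq_length_bitIndices hm, List.length_eq_one_iff] at h
  obtain ⟨p, hp⟩ := h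
  have hpm : m = 2 ^ p := by
    rw [← Nat.sum_map_two_pow_bitIndices m, hp, List.map_singleton, List.sum_singleton]
  exact ⟨p, (Nat.pow_lt_pow_iff_right one_lt_two).mp (hpm ▸ hm), hpm⟩

lemma hamW_xor_two_pow_of_testBit_eq_false {m p : ℕ} (hp : p < n) (h : m.testBit p = false) :
    hamW n (m ^^^ 2 ^ p) = hamW n m + 1 := by
  have hbits : (range n).filter (fun q => (m ^^^ 2 ^ p).testBit q)
      = insert p ((range n).filter (fun q => m.testBit q)) := by
    ext q
    by_cases hq : q = p
    · subst hq; simp [Nat.testBit_xor, h, hp]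
    · simp [Nat.testBit_xor, Nat.testBit_two_pow, hq, Ne.symm hq]
  rw [hamW, hbits, card_insert_of_notMem (by simp [h]), hamW]

lemma hamW_xor_two_pow_of_testBit_eq_true {m p : ℕ} (hp : p < n) (h : m.testBit p = true) :
    hamW n (m ^^^ 2 ^ p) + 1 = hamW n m := by
  have h' : (m ^^^ 2 ^ p).testBit p = false := by simp [Nat.testBit_xor, h]
  simpa [Nat.xor_assoc] using (hamW_xor_two_pow_of_testBit_eq_false hp h').symm

lemma hamW_two_pow {p : ℕ} (hp : p < n) : hamW n (2 ^ p) = 1 := by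
  simpa [hamW] using hamW_xor_two_pow_of_testBit_eq_false (m := 0) hp (Nat.zero_testBit p)

lemma hamW_add_hamW_of_hamD_eq_one {i j : ℕ} (hij : i ^^^ j < 2 ^ n) (h : hamD n i j = 1) :
    hamW n i + hamW n j = 2 * min (hamW n i) (hamW n j) + 1 := by
  rw [hamD_eq_hamW_xor] at h
  obtain ⟨p, hp, hxy⟩ := exists_eq_two_pow_of_hamW_eq_one hij h
  rw [xor_eq_iff_right_eq] at hxy
  cases hb : i.testBit p
  · have := hamW_xor_two_pow_of_testBit_eq_false hp hb
    rw [← hxy] at this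
    omega
  · have := hamW_xor_two_pow_of_testBit_eq_true hp hb
    rw [← hxy] at this
    omega

lemma sum_ite_testBit (m : ℕ) (u v : ℝ) :
    ∑ p : Fin n, (if m.testBit p then u else v) = hamW n m * u + (n - hamW n m) * v := by
  rw [Fin.sum_univ_eq_sum_range (fun p => if m.testBit p then u else v), sum_ite, sum_const,
    sum_const, nsmul_eq_mul, nsmul_eq_mul, hamW, filter_not,
    card_sdiff_of_subset (filter_subset _ _), card_range,
    Nat.cast_sub ((card_filter_le _ _).trans (card_range n).le)]

end Hamming

section Hypercube

variable {n : ℕ}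

-- Under `^^^`, `Fin (2 ^ n)` is the group `(ZMod 2) ^ n`, with basis vectors `bit p`.
def bit (p : Fin n) : Fin (2 ^ n) := ⟨2 ^ (p : ℕ), Nat.pow_lt_pow_right one_lt_two p.2⟩

lemma val_xor (x y : Fin (2 ^ n)) : ((x ^^^ y : Fin (2 ^ n)) : ℕ) = x ^^^ y := by
  rw [Fin.xor_val, Nat.mod_eq_of_lt (Nat.xor_lt_two_pow x.2 y.2)]

lemma val_bit (p : Fin n) : (bit p : ℕ) = 2 ^ (p : ℕ) := rfl

lemma bit_injective : Function.Injective (bit (n := n)) := fun _ _ h =>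
  Fin.ext (Nat.pow_right_injective le_rfl (congrArg Fin.val h))

lemma sum_ite_eq_bit (x : Fin (2 ^ n)) :
    ∑ p, (if x = bit p then (1 : ℝ) else 0) = if hamW n x = 1 then 1 else 0 := by
  split_ifs with h
  · obtain ⟨p, hp, hx⟩ := exists_eq_two_pow_of_hamW_eq_one x.2 h
    rw [show x = bit ⟨p, hp⟩ from Fin.ext hx]
    simp [bit_injective.eq_iff]
  · refine sum_eq_zero fun p _ => if_neg ?_
    rintro rfl
    exact h (hamW_two_pow p.2)

lemma sum_ite_hamW_xor_bit_eq_one (x : Fin (2 ^ n)) :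
    ∑ p, (if hamW n ↑(x ^^^ bit p : Fin (2 ^ n)) = 1 then (1 : ℝ) else 0)
      = (if hamW n x = 0 then (n : ℝ) else 0) + (if hamW n x = 2 then 2 else 0) := by
  have hterm : ∀ p : Fin n, (if hamW n ↑(x ^^^ bit p : Fin (2 ^ n)) = 1 then (1 : ℝ) else 0)
      = if (x : ℕ).testBit p then (if hamW n x = 2 then 1 else 0)
        else (if hamW n x = 0 then 1 else 0) := by
    intro p
    rw [val_xor, val_bit]
    cases h : (x : ℕ).testBit p
    · simp [hamW_xor_two_pow_of_testBit_eq_false p.2 h]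
    · simp [← hamW_xor_two_pow_of_testBit_eq_true p.2 h]
  rw [sum_congr rfl fun p _ => hterm p, sum_ite_testBit]
  split_ifs <;> simp_all

def bitFlip (p : Fin n) : Equiv.Perm (Fin (2 ^ n)) := (xor_left_involutive (bit p)).toPerm

lemma bitFlip_apply (p : Fin n) (x : Fin (2 ^ n)) : bitFlip p x = x ^^^ bit p := rfl

lemma bitFlip_involutive (p : Fin n) : Function.Involutive (bitFlip p) :=
  xor_left_involutive (bit p)

def hypercubeAdj (n : ℕ) : Matrix (Fin (2 ^ n)) (Fin (2 ^ n)) ℝ :=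
  ∑ p, (bitFlip p).permMatrix ℝ

lemma hypercubeAdj_apply (x y : Fin (2 ^ n)) :
    hypercubeAdj n x y = if hamD n x y = 1 then 1 else 0 := by
  rw [hamD_eq_hamW_xor, ← val_xor, ← sum_ite_eq_bit, hypercubeAdj, Matrix.sum_apply]
  refine sum_congr rfl fun p _ => ?_
  simp [PEquiv.toMatrix_apply, bitFlip_apply, xor_eq_iff_right_eq x y, @eq_comm _ y]

lemma hypercubeAdj_mul_self_apply (x y : Fin (2 ^ n)) :
    (hypercubeAdj n * hypercubeAdj n) x y
      = (if x = y then (n : ℝ) else 0) + (if hamD n x y = 2 then 2 else 0) := by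
  nth_rw 1 [hypercubeAdj]
  rw [Matrix.sum_mul, Matrix.sum_apply]
  have hcomm : ∀ p, (x ^^^ bit p) ^^^ y = (x ^^^ y) ^^^ bit p := fun p => by
    rw [xor_assoc, xor_comm (bit p), ← xor_assoc]
  simp only [Equiv.Perm.permMatrix, PEquiv.toMatrix_toPEquiv_mul, Matrix.submatrix_apply, id,
    hypercubeAdj_apply, hamD_eq_hamW_xor, ← val_xor, bitFlip_apply, hcomm,
    sum_ite_hamW_xor_bit_eq_one, hamW_eq_zero_iff (x ^^^ y).2, Fin.val_eq_zero_iff,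
    xor_eq_zero_iff]

end Hypercube

section PauliSum

variable {n : ℕ}

def bitSign (p : Fin n) (x : Fin (2 ^ n)) : ℝ := if (x : ℕ).testBit p then -1 else 1

lemma sum_bitSign (x : Fin (2 ^ n)) : ∑ p, bitSign p x = n - 2 * hamW n x := by
  simp only [bitSign]
  rw [sum_ite_testBit]
  ring

lemma bitSign_bitFlip (p : Fin n) (x : Fin (2 ^ n)) : bitSign p (bitFlip p x) = -bitSign p x := by
  cases h : (x : ℕ).testBit p <;>
    simp [bitSign, bitFlip_apply, val_bit, Nat.testBit_xor, h]

lemma bitSign_sq (p : Fin n) (x : Fin (2 ^ n)) : bitSign p x ^ 2 = 1 := by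
  unfold bitSign
  split_ifs <;> norm_num

-- `Σ_p (Z_p - X_p)`: `Z_p = diagonal (bitSign p)`, `X_p` the permutation matrix of `bitFlip p`.
def pauliSum (n : ℕ) : Matrix (Fin (2 ^ n)) (Fin (2 ^ n)) ℝ :=
  Matrix.diagonal (fun x : Fin (2 ^ n) => (n : ℝ) - 2 * hamW n x) - hypercubeAdj n

lemma pauliSum_transpose : (pauliSum n)ᵀ = pauliSum n := by
  ext x y
  by_cases h : x = y
  · subst h; rfl
  · simp [pauliSum, hypercubeAdj_apply, h, Ne.symm h, hamD_comm (x : ℕ)]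

lemma pauliSum_mulVec (a : Fin (2 ^ n) → ℝ) :
    pauliSum n *ᵥ a = fun x => ∑ p, (bitSign p x * a x - a (bitFlip p x)) := by
  ext x
  rw [pauliSum, sub_mulVec, hypercubeAdj, sum_mulVec]
  simp only [Pi.sub_apply, mulVec_diagonal, Finset.sum_apply, permMatrix_mulVec,
    Function.comp_apply, sum_sub_distrib, ← sum_mul, sum_bitSign]

lemma pauliSum_mul_self_apply (x y : Fin (2 ^ n)) :
    (pauliSum n * pauliSum n) x y
      = (if x = y then ((n : ℝ) - 2 * hamW n x) ^ 2 + n else 0)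
        + (if hamD n x y = 1 then -(((n : ℝ) - 2 * hamW n x) + ((n : ℝ) - 2 * hamW n y)) else 0)
        + (if hamD n x y = 2 then 2 else 0) := by
  simp only [pauliSum, sub_mul, mul_sub, Matrix.sub_apply, Matrix.diagonal_mul_diagonal,
    Matrix.diagonal_mul, Matrix.mul_diagonal, Matrix.diagonal_apply, hypercubeAdj_apply,
    hypercubeAdj_mul_self_apply]
  by_cases h : x = y
  · subst h
    simp only [hamD_self, if_true, if_neg zero_ne_one, if_neg (OfNat.zero_ne_ofNat 2)]
    ring
  · simp only [h, if_false]
    split_ifs <;> ring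

lemma sum_pauliSum_mulVec_sq_le (a : Fin (2 ^ n) → ℝ) :
    ∑ x, (pauliSum n *ᵥ a) x ^ 2 ≤ 2 * n ^ 2 * ∑ x, a x ^ 2 := by
  rw [pauliSum_mulVec]
  calc ∑ x, (∑ p, (bitSign p x * a x - a (bitFlip p x))) ^ 2
      ≤ n * ∑ p : Fin n, ∑ x, (bitSign p x * a x - a (bitFlip p x)) ^ 2 := by
        simpa using sum_sq_sum_le_card_mul fun p x => bitSign p x * a x - a (bitFlip p x)
    _ = 2 * n ^ 2 * ∑ x, a x ^ 2 := by
        rw [sum_congr rfl fun p _ => sum_sq_mul_sub_comp_of_involutive (bitFlip_involutive p)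
          (bitSign_bitFlip p) (bitSign_sq p) a, sum_const, card_univ, Fintype.card_fin,
          nsmul_eq_mul]
        ring

end PauliSum

local notation "γ" => (1 - 1 / Real.sqrt 2 : ℝ)

lemma one_sub_one_div_sqrt_two_pos : 0 < γ := by
  have : 1 / Real.sqrt 2 < 1 := (div_lt_one (by positivity)).mpr Real.one_lt_sqrt_two
  linarith

lemma two_mul_one_sub_one_div_sqrt_two_lt_one : 2 * γ < 1 := by
  have : 2 * (1 / Real.sqrt 2) = Real.sqrt 2 := by
    rw [mul_one_div, Real.div_sqrt]
  linarith [Real.one_lt_sqrt_two]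

lemma Mmat_eq {n : ℕ} (hn : n ≠ 0) :
    Mmat n = (((n : ℝ) - 1) * γ + 2 * γ ^ 2) • 1 - (γ ^ 2 / n) • (pauliSum n * pauliSum n) := by
  have hn' : (n : ℝ) ≠ 0 := Nat.cast_ne_zero.mpr hn
  ext x y
  simp only [Matrix.sub_apply, Matrix.smul_apply, one_apply, pauliSum_mul_self_apply,
    smul_eq_mul, Mmat]
  generalize (1 - 1 / Real.sqrt 2 : ℝ) = c
  by_cases hxy : x = y
  · subst hxy
    simp only [hamD_self, if_true, if_neg zero_ne_one, if_neg (OfNat.zero_ne_ofNat 2)]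
    field_simp
    ring
  by_cases h1 : hamD n x y = 1
  · have hw : (hamW n x : ℝ) + hamW n y = 2 * min (hamW n x : ℝ) (hamW n y) + 1 := by
      exact_mod_cast hamW_add_hamW_of_hamD_eq_one (Nat.xor_lt_two_pow x.2 y.2) h1
    simp only [if_neg hxy, if_pos h1, if_neg (by omega : hamD n x y ≠ 2)]
    linear_combination (2 * c ^ 2 / n) * hw
  by_cases h2 : hamD n x y = 2
  · simp only [if_neg hxy, if_neg h1, if_pos h2]
    ring
  · simp [hxy, h1, h2]

/-- For every `n ≥ 2`, the real symmetric matrix `M` is positive definite: it is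
symmetric and every nonzero real vector `a` satisfies `Σ_{j,k} a_j M_{jk} a_k > 0`. -/
theorem stmt8 (n : ℕ) (hn : 2 ≤ n) :
    (Mmat n).IsSymm ∧
    ∀ a : Fin (2 ^ n) → ℝ, a ≠ 0 →
      0 < ∑ j : Fin (2 ^ n), ∑ k : Fin (2 ^ n), a j * Mmat n j k * a k := by
  rw [Mmat_eq (by omega)]
  refine ⟨isSymm_one.smul _ |>.sub (IsSymm.smul ?_ _), fun a ha => ?_⟩
  · rw [IsSymm, transpose_mul, pauliSum_transpose]
  rw [sum_mul_smul_one_sub_smul_mul_self_mul pauliSum_transpose]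
  obtain ⟨x, hx⟩ := Function.ne_iff.mp ha
  have hS : 0 < ∑ x, a x ^ 2 :=
    sum_pos' (fun _ _ => sq_nonneg _) ⟨x, mem_univ x, pow_two_pos_of_ne_zero hx⟩
  have hn1 : 0 < (n : ℝ) - 1 := by
    have : (2 : ℝ) ≤ n := by exact_mod_cast hn
    linarith
  have hγ := one_sub_one_div_sqrt_two_pos
  have hγ' : 0 < 1 - 2 * γ := by linarith [two_mul_one_sub_one_div_sqrt_two_lt_one]
  calc 0 < ((n : ℝ) - 1) * γ * (1 - 2 * γ) * ∑ x, a x ^ 2 := by positivity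
    _ = (((n : ℝ) - 1) * γ + 2 * γ ^ 2) * ∑ x, a x ^ 2
          - γ ^ 2 / n * (2 * n ^ 2 * ∑ x, a x ^ 2) := by
        field_simp
        ring
    _ ≤ _ := by gcongr; exact sum_pauliSum_mulVec_sq_le a
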